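/- Let f : S¹ → S¹ be an orientation preserving homeomorphism with no periodic point. Then either the nonwandering set Ω(f) is the whole circle S¹, or Ω(f) is a nowhere dense perfect subset of S¹. -/

import Mathlib

/-! A minimal set `M` of `f` (a nonempty closed invariant set, minimal by Zorn's lemma) consists
of nonwandering points, each of its points being a limit of its own forward orbit; as `f` has no
periodic points this also makes `M` perfect, and unless `M = S¹` it is nowhere dense, because its
frontier is again closed, nonempty and invariant. When `M ≠ S¹` no other point is nonwandering:
lift a gap of `M` to an interval `(a, b)` of `ℝ`; if `f^m` brings a point of the gap back into it,
a lift of `f^m` maps `(a, b)` onto itself, hence fixes `a`, and `a` projects to a periodic point. -/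

/-- The circle, as `ℝ/ℤ`. -/
abbrev S1 : Type := AddCircle (1 : ℝ)

/-- A circle homeomorphism is orientation preserving if it has a continuous strictly
monotone increasing lift commuting with the deck translation `x ↦ x + 1`. -/
def OrientationPreserving (f : S1 ≃ₜ S1) : Prop :=
  ∃ F : ℝ → ℝ, StrictMono F ∧ Continuous F ∧ (∀ x : ℝ, F (x + 1) = F x + 1) ∧
    ∀ x : ℝ, f ((x : ℝ) : S1) = ((F x : ℝ) : S1)

/-- The `k`-th iterate of a homeomorphism, for `k : ℤ`. -/
noncomputable def zIter (f : S1 ≃ₜ S1) (k : ℤ) : S1 → S1 :=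
  if 0 ≤ k then (⇑f)^[k.toNat] else (⇑f.symm)^[(-k).toNat]

/-- `f` has no periodic point. -/
def NoPeriodicPoint (f : S1 ≃ₜ S1) : Prop :=
  ∀ (x : S1) (n : ℕ), 1 ≤ n → (⇑f)^[n] x ≠ x

/-- `x` is a nonwandering point of `f`: every neighborhood `U` of `x` meets `f^k(U)`
for some nonzero integer `k`. -/
def IsNonwandering (f : S1 ≃ₜ S1) (x : S1) : Prop :=
  ∀ U ∈ nhds x, ∃ k : ℤ, k ≠ 0 ∧ (zIter f k '' U ∩ U).Nonempty

/-- The nonwandering set `Ω(f)`. -/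
def nonwanderingSet (f : S1 ≃ₜ S1) : Set S1 := {x | IsNonwandering f x}

/-- The ω-limit set of the orbit of `x`. -/
def omegaSet (f : S1 ≃ₜ S1) (x : S1) : Set S1 :=
  ⋂ n : ℕ, closure {y | ∃ k ≥ n, (⇑f)^[k] x = y}

/-- The α-limit set of the orbit of `x`. -/
def alphaSet (f : S1 ≃ₜ S1) (x : S1) : Set S1 :=
  ⋂ n : ℕ, closure {y | ∃ k ≥ n, (⇑f.symm)^[k] x = y}

open Set Function Topology

section MinimalSet

variable {X : Type*} [TopologicalSpace X]

def IsMinimalSet (f : X → X) (M : Set X) : Prop :=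
  Minimal (fun A : Set X => A.Nonempty ∧ IsClosed A ∧ MapsTo f A A) M

theorem exists_isMinimalSet [CompactSpace X] [Nonempty X] (f : X → X) :
    ∃ M, IsMinimalSet f M := by
  set S : Set (Set X) := {A | A.Nonempty ∧ IsClosed A ∧ MapsTo f A A}
  have hchain : ∀ c ⊆ S, IsChain (· ⊆ ·) c → c.Nonempty → ∃ lb ∈ S, ∀ s ∈ c, lb ⊆ s := by
    intro c hcS hc hcne
    have : Nonempty c := hcne.to_subtype
    refine ⟨⋂₀ c, ⟨?_, isClosed_sInter fun A hA => (hcS hA).2.1, ?_⟩,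
      fun _ => sInter_subset_of_mem⟩
    · exact IsCompact.nonempty_sInter_of_directed_nonempty_isCompact_isClosed
        (fun A hA B hB => (hc.total hA hB).elim (fun h => ⟨A, hA, subset_rfl, h⟩)
          fun h => ⟨B, hB, h, subset_rfl⟩) (fun A hA => (hcS hA).1)
        (fun A hA => (hcS hA).2.1.isCompact) (fun A hA => (hcS hA).2.1)
    · exact fun x hx => mem_sInter.2 fun A hA => (hcS hA).2.2 (hx A hA)
  obtain ⟨M, -, hM⟩ := zorn_superset_nonempty S hchain univ
    ⟨univ_nonempty, isClosed_univ, mapsTo_univ f univ⟩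
  exact ⟨M, hM⟩

namespace IsMinimalSet

variable {f : X → X} {M : Set X}

theorem nonempty (hM : IsMinimalSet f M) : M.Nonempty := hM.1.1

theorem isClosed (hM : IsMinimalSet f M) : IsClosed M := hM.1.2.1

theorem mapsTo (hM : IsMinimalSet f M) : MapsTo f M M := hM.1.2.2

theorem eq_of_subset (hM : IsMinimalSet f M) {A : Set X} (hne : A.Nonempty) (hcl : IsClosed A)
    (hA : MapsTo f A A) (hAM : A ⊆ M) : A = M :=
  hAM.antisymm (hM.2 ⟨hne, hcl, hA⟩ hAM)

theorem mem_closure_range_iterate (hM : IsMinimalSet f M) (hf : Continuous f) {x : X}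
    (hx : x ∈ M) : x ∈ closure (range fun k : ℕ => f^[k + 1] x) := by
  set O := range fun k : ℕ => f^[k + 1] x
  have hOM : closure O ⊆ M := closure_minimal
    (range_subset_iff.2 fun k => hM.mapsTo.iterate (k + 1) hx) hM.isClosed
  have hfO : MapsTo f O O := by
    rintro _ ⟨k, rfl⟩
    exact ⟨k + 1, iterate_succ_apply' f (k + 1) x⟩
  have hO : closure O = M :=
    hM.eq_of_subset ⟨f x, subset_closure ⟨0, rfl⟩⟩ isClosed_closure (hfO.closure hf) hOM
  exact hO ▸ hx

theorem perfect (hM : IsMinimalSet f M) (hf : Continuous f)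
    (hper : ∀ x ∈ M, x ∉ periodicPts f) : Perfect M := by
  refine ⟨hM.isClosed, fun x hx => accPt_iff_nhds.2 fun U hU => ?_⟩
  obtain ⟨_, hyU, k, rfl⟩ := mem_closure_iff_nhds.1 (hM.mem_closure_range_iterate hf hx) U hU
  exact ⟨f^[k + 1] x, ⟨hyU, hM.mapsTo.iterate (k + 1) hx⟩,
    fun hfix => hper x hx ⟨k + 1, k.succ_pos, hfix⟩⟩

theorem preimage_eq {e : X ≃ₜ X} (hM : IsMinimalSet e M) : e ⁻¹' M = M := by
  have himage : e '' M = M := hM.eq_of_subset (hM.nonempty.image e) (e.isClosedMap M hM.isClosed)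
    (fun _ hy => mem_image_of_mem e (hM.mapsTo.image_subset hy)) hM.mapsTo.image_subset
  exact (preimage_eq_iff_eq_image e.bijective).2 himage.symm

theorem preimage_iterate_eq {e : X ≃ₜ X} (hM : IsMinimalSet e M) (k : ℕ) :
    (⇑e)^[k] ⁻¹' M = M := by
  rw [Set.preimage_iterate_eq]
  exact iterate_fixed hM.preimage_eq k

theorem isNowhereDense [ConnectedSpace X] {e : X ≃ₜ X} (hM : IsMinimalSet e M)
    (hne : M ≠ univ) : IsNowhereDense M := by
  have hfr : (frontier M).Nonempty := by
    by_contra h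
    exact hne ((isClopen_iff_frontier_eq_empty.2 (not_nonempty_iff_eq_empty.1 h)).eq_univ
      hM.nonempty)
  have hfrM : frontier M = M := hM.eq_of_subset hfr isClosed_frontier
    (fun x hx => by rwa [← mem_preimage, e.preimage_frontier, hM.preimage_eq])
    hM.isClosed.frontier_subset
  rw [hM.isClosed.frontier_eq] at hfrM
  refine hM.isClosed.isNowhereDense_iff.2 (eq_empty_of_forall_notMem fun x hx => ?_)
  exact (hfrM.symm ▸ interior_subset hx : x ∈ M \ interior M).2 hx

end IsMinimalSet

end MinimalSet

theorem IsClosed.exists_Ioo_disjoint {α : Type*} [ConditionallyCompleteLinearOrder α]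
    [TopologicalSpace α] [OrderTopology α] {C : Set α} (hC : IsClosed C) {t : α} (ht : t ∉ C)
    (hlo : (C ∩ Iic t).Nonempty) (hhi : (C ∩ Ici t).Nonempty) :
    ∃ a b, a ∈ C ∧ t ∈ Ioo a b ∧ Disjoint (Ioo a b) C := by
  have hbdd : BddAbove (C ∩ Iic t) := ⟨t, fun _ hx => hx.2⟩
  have hbdd' : BddBelow (C ∩ Ici t) := ⟨t, fun _ hx => hx.2⟩
  have ha := (hC.inter isClosed_Iic).csSup_mem hlo hbdd
  have hb := (hC.inter isClosed_Ici).csInf_mem hhi hbdd'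
  refine ⟨_, _, ha.1, ⟨ha.2.lt_of_ne (ne_of_mem_of_not_mem ha.1 ht),
    hb.2.lt_of_ne' (ne_of_mem_of_not_mem hb.1 ht)⟩, disjoint_left.2 ?_⟩
  rintro x ⟨hax, hxb⟩ hxC
  rcases le_total x t with hxt | htx
  · exact hax.not_ge (le_csSup hbdd ⟨hxC, hxt⟩)
  · exact hxb.not_ge (csInf_le hbdd' ⟨hxC, htx⟩)

theorem Monotone.isFixedPt_of_gap {α : Type*} [LinearOrder α] {G : α → α} (hG : Monotone G)
    (hsurj : Surjective G) {C : Set α} (hC : G ⁻¹' C = C) {a b s : α} (ha : a ∈ C)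
    (hgap : Disjoint (Ioo a b) C) (hs : s ∈ Ioo a b) (hGs : G s ∈ Ioo a b) : IsFixedPt G a := by
  have hGa : G a ≤ a := not_lt.1 fun h => disjoint_left.1 hgap
    ⟨h, (hG hs.1.le).trans_lt hGs.2⟩ (hC.symm ▸ ha : a ∈ G ⁻¹' C)
  obtain ⟨c, hc⟩ := hsurj a
  have hcC : c ∈ C := hC ▸ (show G c ∈ C from hc ▸ ha)
  have hcs : c < s := not_le.1 fun h => (hGs.1.trans_le (hG h)).ne' hc
  have hca : c ≤ a := not_lt.1 fun h => disjoint_left.1 hgap ⟨h, hcs.trans hs.2⟩ hcC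
  exact hGa.antisymm (hc.symm.trans_le (hG hca))

theorem exists_int_of_coe_eq_coe {x y : ℝ} (h : ((x : ℝ) : S1) = y) : ∃ n : ℤ, x = y + n := by
  rw [← sub_eq_zero, ← AddCircle.coe_sub, AddCircle.coe_eq_zero_iff] at h
  obtain ⟨n, hn⟩ := h
  exact ⟨n, by simp only [zsmul_eq_mul, mul_one] at hn; linarith⟩

theorem nonempty_preimage_coe_inter_Iic_and_Ici {M : Set S1} (hM : M.Nonempty) (t : ℝ) :
    (((↑) : ℝ → S1) ⁻¹' M ∩ Iic t).Nonempty ∧ (((↑) : ℝ → S1) ⁻¹' M ∩ Ici t).Nonempty := by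
  obtain ⟨w, hw⟩ := hM
  obtain ⟨w, rfl⟩ := QuotientAddGroup.mk_surjective w
  refine ⟨⟨w + ⌊t - w⌋, ?_, mem_Iic.2 (by linarith [Int.floor_le (t - w)])⟩,
    ⟨w + ⌈t - w⌉, ?_, mem_Ici.2 (by linarith [Int.le_ceil (t - w)])⟩⟩ <;> simpa using hw

theorem OrientationPreserving.exists_lift_iterate {f : S1 ≃ₜ S1} (hor : OrientationPreserving f)
    (m : ℕ) {s s' : ℝ} (h : (⇑f)^[m] (s : S1) = s') :
    ∃ G : ℝ → ℝ, Monotone G ∧ Surjective G ∧ (∀ x : ℝ, ((G x : ℝ) : S1) = (⇑f)^[m] x) ∧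
      G s = s' := by
  obtain ⟨F, hFmono, hFcont, hF1, hF⟩ := hor
  have hlift : ∀ x : ℝ, ((F^[m] x : ℝ) : S1) = (⇑f)^[m] x :=
    Semiconj.iterate_right (f := ((↑) : ℝ → S1)) (fun x => (hF x).symm) m
  have hFsurj : Surjective F :=
    (CircleDeg1Lift.continuous_iff_surjective ⟨⟨F, hFmono.monotone⟩, hF1⟩).1 hFcont
  obtain ⟨n, hn⟩ := exists_int_of_coe_eq_coe ((hlift s).trans h)
  refine ⟨fun x => F^[m] x - n, fun x y hxy => sub_le_sub_right (hFmono.monotone.iterate m hxy) _,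
    fun y => ?_, fun x => by simp [hlift], by simp [hn]⟩
  obtain ⟨x, hx⟩ := hFsurj.iterate m (y + n)
  exact ⟨x, by simp [hx]⟩

theorem zIter_natCast (f : S1 ≃ₜ S1) (k : ℕ) : zIter f k = (⇑f)^[k] := by
  simp [zIter]

section Nonwandering

variable {f : S1 ≃ₜ S1}

theorem isNonwandering_of_mem_closure_range_iterate {x : S1}
    (hx : x ∈ closure (range fun k : ℕ => (⇑f)^[k + 1] x)) : IsNonwandering f x := by
  intro U hU
  obtain ⟨_, hyU, k, rfl⟩ := mem_closure_iff_nhds.1 hx U hU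
  refine ⟨(k + 1 : ℕ), by omega, _, ⟨x, mem_of_mem_nhds hU, ?_⟩, hyU⟩
  rw [zIter_natCast]

theorem IsNonwandering.exists_iterate_mem {z : S1} (hz : IsNonwandering f z) {U : Set S1}
    (hU : U ∈ 𝓝 z) : ∃ m, 1 ≤ m ∧ ∃ v ∈ U, (⇑f)^[m] v ∈ U := by
  obtain ⟨k, hk0, _, ⟨u, hu, rfl⟩, hy⟩ := hz U hU
  rcases le_or_gt 0 k with hk | hk
  · exact ⟨k.toNat, by omega, u, hu, by simpa [zIter, hk] using hy⟩
  · refine ⟨(-k).toNat, by omega, _, hy, ?_⟩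
    rw [zIter, if_neg hk.not_ge, (LeftInverse.iterate f.apply_symm_apply _) u]
    exact hu

theorem IsNonwandering.mem_of_preimage_iterate_eq (hor : OrientationPreserving f)
    (hnp : NoPeriodicPoint f) {M : Set S1} (hMcl : IsClosed M) (hMne : M.Nonempty)
    (hM : ∀ k, (⇑f)^[k] ⁻¹' M = M) {z : S1} (hz : IsNonwandering f z) : z ∈ M := by
  by_contra hzM
  obtain ⟨t, rfl⟩ := QuotientAddGroup.mk_surjective z
  set C := ((↑) : ℝ → S1) ⁻¹' M
  obtain ⟨hlo, hhi⟩ := nonempty_preimage_coe_inter_Iic_and_Ici hMne t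
  obtain ⟨a, b, haC, htab, hgap⟩ :=
    (hMcl.preimage (AddCircle.continuous_mk' 1)).exists_Ioo_disjoint hzM hlo hhi
  have hU : ((↑) : ℝ → S1) '' Ioo a b ∈ 𝓝 (t : S1) :=
    (QuotientAddGroup.isOpenMap_coe _ isOpen_Ioo).mem_nhds ⟨t, htab, rfl⟩
  obtain ⟨m, hm, _, ⟨s, hs, rfl⟩, s', hs', hss'⟩ := hz.exists_iterate_mem hU
  obtain ⟨G, hGmono, hGsurj, hGlift, hGs⟩ := hor.exists_lift_iterate m hss'.symm
  have hGC : G ⁻¹' C = C := by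
    ext x
    simp only [C, mem_preimage, hGlift, ← mem_preimage (f := (⇑f)^[m]), hM m]
  have hfix : IsFixedPt G a := hGmono.isFixedPt_of_gap hGsurj hGC haC hgap hs (hGs ▸ hs')
  exact hnp _ m hm (by rw [← hGlift, hfix])

end Nonwandering

/-- for an orientation preserving circle homeomorphism with no periodic
point, the nonwandering set is either the whole circle or a nowhere dense perfect set. -/
theorem nonwanderingSet_univ_or_nowhereDense_perfect (f : S1 ≃ₜ S1)
    (hor : OrientationPreserving f) (hnp : NoPeriodicPoint f) :
    nonwanderingSet f = Set.univ ∨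
      (IsNowhereDense (nonwanderingSet f) ∧ Perfect (nonwanderingSet f)) := by
  obtain ⟨M, hM⟩ := exists_isMinimalSet f
  have hMΩ : M ⊆ nonwanderingSet f := fun x hx =>
    isNonwandering_of_mem_closure_range_iterate (hM.mem_closure_range_iterate f.continuous hx)
  by_cases hMuniv : M = univ
  · exact Or.inl (univ_subset_iff.1 (hMuniv ▸ hMΩ))
  have hΩM : nonwanderingSet f = M := Subset.antisymm
    (fun _ hz => hz.mem_of_preimage_iterate_eq hor hnp hM.isClosed hM.nonempty
      hM.preimage_iterate_eq)
    hMΩ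
  refine Or.inr (hΩM ▸ ⟨hM.isNowhereDense hMuniv, hM.perfect f.continuous ?_⟩)
  rintro x - ⟨n, hn, hx⟩
  exact hnp x n hn hx
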